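/- arXiv:2305.08072 — 2 statements merged into one kernel-verified Lean document; each statement's English description precedes it below -/
import Mathlib

section
/- Let N, m, Sym_Ω be as in the mass-weighted setting and let 𝔘(r) = {σ ∈ Sym_Ω | ∃ A ∈ SO(3), t ∈ ℝ³, ∀ i, r (σ i) = A (r i) + √(m i) • t}. Then the symmetry number is well defined on (ℝ³)^N / (E⁺(3) × Sym_Ω): for every σ ∈ Sym_Ω, every proper Euclidean motion g = (t, A) with A ∈ SO(3), t ∈ ℝ³, and every configuration r, the cardinality of 𝔘(σ·(g·r)) equals the cardinality of 𝔘(r). -/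
/-- `ℝ³` as a Euclidean space. -/
noncomputable abbrev E3 : Type := EuclideanSpace ℝ (Fin 3)

/-- The mass-weighted proper Euclidean action of `g = (t, A)`:
`(g·r) i = A (r i) + √(m i) • t`. -/
noncomputable def euclAct (N : ℕ) (m : Fin N → ℝ) (A : Matrix (Fin 3) (Fin 3) ℝ)
    (t : E3) (r : Fin N → E3) : Fin N → E3 :=
  fun i => Matrix.toEuclideanLin A (r i) + Real.sqrt (m i) • t

/-- The permutation action on configurations: `(σ·r) i = r (σ i)`. -/
def permAct (N : ℕ) (σ : Equiv.Perm (Fin N)) (r : Fin N → E3) : Fin N → E3 :=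
  fun i => r (σ i)

/-- `𝔘(r)`: the set of permutations `σ ∈ Sym_Ω` such that `σ·r` lies in the mass-weighted
`E⁺(3)`-orbit of `r`. Its cardinality is the symmetry number of `r`. -/
noncomputable def USet (N : ℕ) (m : Fin N → ℝ) (SymΩ : Subgroup (Equiv.Perm (Fin N)))
    (r : Fin N → E3) : Set (Equiv.Perm (Fin N)) :=
  {σ | σ ∈ SymΩ ∧ ∃ A : Matrix (Fin 3) (Fin 3) ℝ,
    A ∈ Matrix.orthogonalGroup (Fin 3) ℝ ∧ A.det = 1 ∧
    ∃ t : E3, ∀ i, r (σ i) = Matrix.toEuclideanLin A (r i) + Real.sqrt (m i) • t}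

/-!
The mass-weighted Euclidean action commutes with every mass-preserving permutation, since
`√(m (σ i)) = √(m i)`. Hence a proper motion `g` leaves both the orbit of `r` and the condition
`τ·r ∈ E⁺(3)·r` unchanged, so `𝔘(g·r) = 𝔘(r)`; and `τ·(σ·r) = σ·((σ τ σ⁻¹)·r)` shows that
`𝔘(σ·r)` is the preimage of `𝔘(r)` under conjugation by `σ`, a bijection of `Sym_Ω`.
-/

section

variable {N : ℕ} {m : Fin N → ℝ}

open Matrix

def euclOrbit (N : ℕ) (m : Fin N → ℝ) (r : Fin N → E3) : Set (Fin N → E3) :=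
  {x | ∃ A ∈ specialOrthogonalGroup (Fin 3) ℝ, ∃ t : E3, x = euclAct N m A t r}

theorem mem_USet_iff {SymΩ : Subgroup (Equiv.Perm (Fin N))} {r : Fin N → E3}
    {τ : Equiv.Perm (Fin N)} :
    τ ∈ USet N m SymΩ r ↔ τ ∈ SymΩ ∧ permAct N τ r ∈ euclOrbit N m r := by
  simp [USet, euclOrbit, mem_specialOrthogonalGroup_iff, and_assoc, funext_iff, permAct,
    euclAct]

theorem euclAct_euclAct (A B : Matrix (Fin 3) (Fin 3) ℝ) (s t : E3) (r : Fin N → E3) :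
    euclAct N m B s (euclAct N m A t r) = euclAct N m (B * A) (toEuclideanLin B t + s) r := by
  funext i
  simp only [euclAct, toLpLin_mul_same, LinearMap.comp_apply, map_add, map_smul, smul_add,
    add_assoc]

theorem euclAct_one_zero (r : Fin N → E3) : euclAct N m 1 0 r = r := by
  funext i
  simp [euclAct]

theorem euclAct_star_euclAct {A : Matrix (Fin 3) (Fin 3) ℝ}
    (hA : A ∈ orthogonalGroup (Fin 3) ℝ) (t : E3) (r : Fin N → E3) :
    euclAct N m (star A) (-toEuclideanLin (star A) t) (euclAct N m A t r) = r := by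
  rw [euclAct_euclAct, mem_unitaryGroup_iff'.mp hA, add_neg_cancel, euclAct_one_zero]

theorem star_mem_specialOrthogonalGroup {A : Matrix (Fin 3) (Fin 3) ℝ}
    (hA : A ∈ specialOrthogonalGroup (Fin 3) ℝ) : star A ∈ specialOrthogonalGroup (Fin 3) ℝ :=
  (star (⟨A, hA⟩ : specialOrthogonalGroup (Fin 3) ℝ)).prop

theorem euclAct_mem_euclOrbit {A : Matrix (Fin 3) (Fin 3) ℝ}
    (hA : A ∈ specialOrthogonalGroup (Fin 3) ℝ) (t : E3) (r : Fin N → E3) :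
    euclAct N m A t r ∈ euclOrbit N m r :=
  ⟨A, hA, t, rfl⟩

theorem mem_euclOrbit_self (r : Fin N → E3) : r ∈ euclOrbit N m r :=
  ⟨1, one_mem _, 0, (euclAct_one_zero r).symm⟩

theorem euclOrbit_euclAct {A : Matrix (Fin 3) (Fin 3) ℝ}
    (hA : A ∈ specialOrthogonalGroup (Fin 3) ℝ) (t : E3) (r : Fin N → E3) :
    euclOrbit N m (euclAct N m A t r) = euclOrbit N m r := by
  ext x
  constructor
  · rintro ⟨B, hB, s, rfl⟩
    rw [euclAct_euclAct]
    exact euclAct_mem_euclOrbit (mul_mem hB hA) _ _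
  · rintro ⟨B, hB, s, rfl⟩
    nth_rw 2 [← euclAct_star_euclAct hA.1 t r]
    rw [euclAct_euclAct]
    exact euclAct_mem_euclOrbit (mul_mem hB (star_mem_specialOrthogonalGroup hA)) _ _

theorem euclOrbit_eq_of_mem {x r : Fin N → E3} (h : x ∈ euclOrbit N m r) :
    euclOrbit N m x = euclOrbit N m r := by
  obtain ⟨A, hA, t, rfl⟩ := h
  exact euclOrbit_euclAct hA t r

theorem euclAct_mem_euclOrbit_iff {A : Matrix (Fin 3) (Fin 3) ℝ}
    (hA : A ∈ specialOrthogonalGroup (Fin 3) ℝ) {t : E3} {x r : Fin N → E3} :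
    euclAct N m A t x ∈ euclOrbit N m r ↔ x ∈ euclOrbit N m r := by
  constructor
  · intro h
    rw [← euclOrbit_eq_of_mem h, euclOrbit_euclAct hA]
    exact mem_euclOrbit_self x
  · intro h
    rw [← euclOrbit_eq_of_mem h]
    exact euclAct_mem_euclOrbit hA t x

theorem permAct_permAct (σ τ : Equiv.Perm (Fin N)) (r : Fin N → E3) :
    permAct N τ (permAct N σ r) = permAct N (σ * τ) r :=
  rfl

theorem permAct_injective (σ : Equiv.Perm (Fin N)) : Function.Injective (permAct N σ) := by
  intro x y h
  funext i
  simpa [permAct] using congrFun h (σ⁻¹ i)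

theorem permAct_euclAct {σ : Equiv.Perm (Fin N)} (hσ : ∀ i, m (σ i) = m i)
    (A : Matrix (Fin 3) (Fin 3) ℝ) (t : E3) (r : Fin N → E3) :
    permAct N σ (euclAct N m A t r) = euclAct N m A t (permAct N σ r) := by
  funext i
  simp only [permAct, euclAct, hσ]

theorem permAct_mem_euclOrbit_permAct_iff {σ : Equiv.Perm (Fin N)} (hσ : ∀ i, m (σ i) = m i)
    {x r : Fin N → E3} :
    permAct N σ x ∈ euclOrbit N m (permAct N σ r) ↔ x ∈ euclOrbit N m r := by
  simp only [euclOrbit, Set.mem_ofPred_eq, ← permAct_euclAct hσ, (permAct_injective σ).eq_iff]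

variable {SymΩ : Subgroup (Equiv.Perm (Fin N))}

theorem USet_euclAct (hmass : ∀ σ ∈ SymΩ, ∀ i, m (σ i) = m i) {A : Matrix (Fin 3) (Fin 3) ℝ}
    (hA : A ∈ specialOrthogonalGroup (Fin 3) ℝ) (t : E3) (r : Fin N → E3) :
    USet N m SymΩ (euclAct N m A t r) = USet N m SymΩ r := by
  ext τ
  simp only [mem_USet_iff]
  refine and_congr_right fun hτ => ?_
  rw [permAct_euclAct (hmass τ hτ), euclOrbit_euclAct hA, euclAct_mem_euclOrbit_iff hA]

theorem USet_permAct (hmass : ∀ σ ∈ SymΩ, ∀ i, m (σ i) = m i) {σ : Equiv.Perm (Fin N)}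
    (hσ : σ ∈ SymΩ) (r : Fin N → E3) :
    USet N m SymΩ (permAct N σ r) = MulAut.conj σ ⁻¹' USet N m SymΩ r := by
  ext τ
  have hperm : permAct N τ (permAct N σ r) = permAct N σ (permAct N (σ * τ * σ⁻¹) r) := by
    rw [permAct_permAct, permAct_permAct, inv_mul_cancel_right]
  rw [Set.mem_preimage, MulAut.conj_apply, mem_USet_iff, mem_USet_iff, hperm,
    permAct_mem_euclOrbit_permAct_iff (hmass σ hσ), SymΩ.mul_mem_cancel_right (inv_mem hσ),
    SymΩ.mul_mem_cancel_left hσ]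

end

theorem symmetryNumber_welldefined_general (N : ℕ) (m : Fin N → ℝ)
    (SymΩ : Subgroup (Equiv.Perm (Fin N))) (hmass : ∀ σ ∈ SymΩ, ∀ i, m (σ i) = m i)
    (σ : Equiv.Perm (Fin N)) (hσ : σ ∈ SymΩ)
    (A : Matrix (Fin 3) (Fin 3) ℝ) (hA : A ∈ Matrix.orthogonalGroup (Fin 3) ℝ)
    (hdet : A.det = 1) (t : E3) (r : Fin N → E3) :
    Nat.card (USet N m SymΩ (permAct N σ (euclAct N m A t r)))
      = Nat.card (USet N m SymΩ r) := by
  rw [USet_permAct hmass hσ, USet_euclAct hmass ⟨hA, hdet⟩]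
  exact Nat.card_preimage_of_injective (MulAut.conj σ).injective
    fun τ _ => (MulAut.conj σ).surjective τ

/-- the symmetry number `|𝔘(r)|` is well defined on
`(ℝ³)^N / (E⁺(3) × Sym_Ω)`: acting on `r` by any `σ ∈ Sym_Ω` and any proper Euclidean motion
`g = (t, A)` does not change the cardinality of `𝔘`. -/
theorem symmetryNumber_welldefined (N : ℕ) (hN : 0 < N) (m : Fin N → ℝ) (hm : ∀ i, 0 < m i)
    (SymΩ : Subgroup (Equiv.Perm (Fin N))) (hmass : ∀ σ ∈ SymΩ, ∀ i, m (σ i) = m i)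
    (σ : Equiv.Perm (Fin N)) (hσ : σ ∈ SymΩ)
    (A : Matrix (Fin 3) (Fin 3) ℝ) (hA : A ∈ Matrix.orthogonalGroup (Fin 3) ℝ)
    (hdet : A.det = 1) (t : E3) (r : Fin N → E3) :
    Nat.card (USet N m SymΩ (permAct N σ (euclAct N m A t r)))
      = Nat.card (USet N m SymΩ r) :=
  symmetryNumber_welldefined_general N m SymΩ hmass σ hσ A hA hdet t r
end

section
/- Let G be a group acting on a finite type V, let k : V → V → ℝ satisfy k (σ • v) (σ • v') = k v v' for all σ ∈ G, and let X : ℝ → V → ℝ be such that for each v the function t ↦ X t v is differentiable with derivative ∑_{v' ∈ V} k v v' * X t v'. For each G-orbit O define Y t O = ∑_{v ∈ O} X t v, and choose for each orbit O' a representative c(O') ∈ O'. Then for each orbit O, the function t ↦ Y t O is differentiable and its derivative equals ∑_{O' orbit of V} (∑_{v ∈ O} k v (c O')) * Y t O'; moreover this expression is independent of the choice of representatives c. -/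
/-!
The rate matrix restricted to rows in an orbit `O` has column sums `∑_{v ∈ O} k v v'` that are
constant as `v'` runs through an orbit `O'`, because acting by `σ` permutes `O` and fixes `k`.
So after summing the rate equation over `O` and regrouping the columns by orbits, each orbit
contributes its column sum at any representative times its total population.
-/

open Finset

theorem Finset.sum_mul_eq_sum_fiberwise_of_apply_eq {ι κ R : Type*} [Fintype ι] [Fintype κ]
    [DecidableEq κ] [CommSemiring R] (q : ι → κ) (c : κ → ι)
    (K : ι → R) (hK : ∀ i, K (c (q i)) = K i) (x : ι → R) :
    ∑ i, K i * x i = ∑ j, K (c j) * ∑ i ∈ univ with q i = j, x i := by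
  rw [← sum_fiberwise univ q]
  refine sum_congr rfl fun j _ => ?_
  rw [mul_sum]
  refine sum_congr rfl fun i hi => ?_
  obtain rfl := (mem_filter.mp hi).2
  rw [hK]

section OrbitSums

variable {G V M : Type*} [Group G] [MulAction G V] [Fintype V] [AddCommMonoid M]
  [DecidableEq (Quotient (MulAction.orbitRel G V))]

theorem sum_orbit_apply_smul_right {k : V → V → M}
    (hk : ∀ (σ : G) (v v' : V), k (σ • v) (σ • v') = k v v')
    (O : Quotient (MulAction.orbitRel G V)) (σ : G) (w : V) :
    ∑ v ∈ univ with Quotient.mk (MulAction.orbitRel G V) v = O, k v (σ • w)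
      = ∑ v ∈ univ with Quotient.mk (MulAction.orbitRel G V) v = O, k v w := by
  simp only [sum_filter]
  rw [← Equiv.sum_comp (MulAction.toPerm σ)]
  refine Fintype.sum_congr _ _ fun v => ?_
  simp only [MulAction.toPerm_apply, MulAction.orbitRel.Quotient.quotient_smul_eq, hk]

theorem sum_orbit_apply_eq_of_mk_eq {k : V → V → M}
    (hk : ∀ (σ : G) (v v' : V), k (σ • v) (σ • v') = k v v')
    (O : Quotient (MulAction.orbitRel G V)) {w₁ w₂ : V}
    (h : Quotient.mk (MulAction.orbitRel G V) w₁ = Quotient.mk (MulAction.orbitRel G V) w₂) :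
    ∑ v ∈ univ with Quotient.mk (MulAction.orbitRel G V) v = O, k v w₁
      = ∑ v ∈ univ with Quotient.mk (MulAction.orbitRel G V) v = O, k v w₂ := by
  obtain ⟨σ, rfl⟩ : ∃ σ : G, σ • w₂ = w₁ := Quotient.exact h
  exact sum_orbit_apply_smul_right hk O σ w₂

end OrbitSums

/-- let `k` be a `G`-invariant rate matrix on a finite type `V` and let `X`
satisfy the absolute rate equation `dX_v/dt = ∑_{v'} k v v' * X_{v'}`. For each `G`-orbit `O`
(element of the orbit-space quotient) let `Y t O = ∑_{v ∈ O} X t v`, and choose a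
representative `c O'` of each orbit `O'`. Then `t ↦ Y t O` is differentiable with derivative
`∑_{O'} (∑_{v ∈ O} k v (c O')) * Y t O'`, and the coefficients `∑_{v ∈ O} k v (c O')` do not
depend on the choice of representatives `c`. -/
theorem reduced_rate_equation (G : Type*) [Group G] (V : Type*) [Fintype V] [MulAction G V]
    [DecidableEq (Quotient (MulAction.orbitRel G V))]
    [Fintype (Quotient (MulAction.orbitRel G V))]
    (k : V → V → ℝ) (hk : ∀ (σ : G) (v v' : V), k (σ • v) (σ • v') = k v v')
    (X : ℝ → V → ℝ)
    (hX : ∀ (v : V) (t : ℝ), HasDerivAt (fun t => X t v) (∑ v' : V, k v v' * X t v') t)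
    (c : Quotient (MulAction.orbitRel G V) → V)
    (hc : ∀ O : Quotient (MulAction.orbitRel G V), Quotient.mk (MulAction.orbitRel G V) (c O) = O) :
    (∀ (O : Quotient (MulAction.orbitRel G V)) (t : ℝ),
      HasDerivAt
        (fun t => ∑ v ∈ univ.filter (fun v => Quotient.mk (MulAction.orbitRel G V) v = O), X t v)
        (∑ O' : Quotient (MulAction.orbitRel G V),
          (∑ v ∈ univ.filter (fun v => Quotient.mk (MulAction.orbitRel G V) v = O), k v (c O')) *
          (∑ v' ∈ univ.filter (fun v' => Quotient.mk (MulAction.orbitRel G V) v' = O'), X t v'))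
        t) ∧
    (∀ c' : Quotient (MulAction.orbitRel G V) → V,
      (∀ O : Quotient (MulAction.orbitRel G V), Quotient.mk (MulAction.orbitRel G V) (c' O) = O) →
      ∀ O O' : Quotient (MulAction.orbitRel G V),
        (∑ v ∈ univ.filter (fun v => Quotient.mk (MulAction.orbitRel G V) v = O), k v (c O'))
          = (∑ v ∈ univ.filter (fun v => Quotient.mk (MulAction.orbitRel G V) v = O), k v (c' O'))) := by
  refine ⟨fun O t => ?_, fun c' hc' O O' => sum_orbit_apply_eq_of_mk_eq hk O (by rw [hc, hc'])⟩
  refine (HasDerivAt.fun_sum fun v _ => hX v t).congr_deriv ?_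
  rw [sum_comm]
  simp only [← sum_mul]
  exact sum_mul_eq_sum_fiberwise_of_apply_eq _ c
    (fun v' => ∑ v ∈ univ with Quotient.mk (MulAction.orbitRel G V) v = O, k v v')
    (fun v' => sum_orbit_apply_eq_of_mk_eq hk O (hc _)) _
end
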